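/- Let X be a BES(3) process started from X_0 = 0. Then for any two time points u > t > 0 and any K ≥ 0, one has E[(1/X_u − K)⁺] < E[(1/X_t − K)⁺]. -/

import Mathlib

open MeasureTheory ProbabilityTheory Filter Set
open scoped NNReal ENNReal

/-- A real-valued process `B` is a standard one-dimensional Brownian motion (started at `0`)
under `μ`: it starts at `0`, has a.s. continuous paths, Gaussian increments of the right
variance, and independent increments. -/
def IsStdBrownianMotion {Ω : Type*} [MeasurableSpace Ω] (μ : Measure Ω)
    (B : ℝ≥0 → Ω → ℝ) : Prop :=
  (∀ ω, B 0 ω = 0) ∧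
  (∀ᵐ ω ∂μ, Continuous fun t => B t ω) ∧
  (∀ s t : ℝ≥0, s ≤ t →
    Measure.map (fun ω => B t ω - B s ω) μ = gaussianReal 0 (t - s)) ∧
  (∀ (k : ℕ) (t : Fin (k + 1) → ℝ≥0), Monotone t →
    iIndepFun
      (fun i : Fin k => fun ω => B (t i.succ) ω - B (t i.castSucc) ω) μ)

/-- A process `W` with values in `ℝᵈ` is a `d`-dimensional Brownian motion started at `x`:
it starts at `x`, each coordinate (recentered at its starting point) is a standard
one-dimensional Brownian motion, and the coordinate processes are independent. -/
def IsBrownianMotionFrom {Ω : Type*} [MeasurableSpace Ω] {d : ℕ} (μ : Measure Ω)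
    (W : ℝ≥0 → Ω → EuclideanSpace ℝ (Fin d)) (x : EuclideanSpace ℝ (Fin d)) : Prop :=
  (∀ ω, W 0 ω = x) ∧
  (∀ i, IsStdBrownianMotion μ fun t ω => W t ω i - x i) ∧
  iIndepFun (fun i ω => fun t : ℝ≥0 => W t ω i) μ

/-! ### Auxiliary material -/

namespace InvBesselAux

open Real

set_option linter.unusedSectionVars false

/-- The Euclidean norm on `Fin 3 → ℝ`. -/
noncomputable def N3 (x : Fin 3 → ℝ) : ℝ := Real.sqrt (∑ i, x i ^ 2)

lemma N3_nonneg (x : Fin 3 → ℝ) : 0 ≤ N3 x := Real.sqrt_nonneg _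

lemma measurable_N3 : Measurable N3 := by unfold N3; fun_prop

lemma continuous_N3 : Continuous N3 := by unfold N3; fun_prop

lemma abs_le_N3 (x : Fin 3 → ℝ) (i : Fin 3) : |x i| ≤ N3 x := by
  rw [← Real.sqrt_sq_eq_abs]
  exact Real.sqrt_le_sqrt (Finset.single_le_sum (fun j _ => sq_nonneg (x j)) (Finset.mem_univ i))

lemma N3_smul (c : ℝ) (hc : 0 ≤ c) (x : Fin 3 → ℝ) : N3 (fun i => c * x i) = c * N3 x := by
  unfold N3
  have h : ∑ i, (c * x i) ^ 2 = c ^ 2 * ∑ i, x i ^ 2 := by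
    simp [mul_pow, Finset.mul_sum]
  rw [h, Real.sqrt_mul (sq_nonneg c), Real.sqrt_sq hc]

lemma integrable_abs_rpow_mul_exp {b s : ℝ} (hb : 0 < b) (hs : -1 < s) :
    Integrable (fun y : ℝ => |y| ^ s * Real.exp (-b * y ^ 2)) := by
  have h := integrableOn_rpow_mul_exp_neg_mul_sq hb hs
  rw [← integrableOn_univ, ← Iio_union_Ici (a := (0:ℝ)), integrableOn_union]
  constructor
  · rw [← (Measure.measurePreserving_neg (volume : Measure ℝ)).integrableOn_comp_preimage
      (Homeomorph.neg ℝ).measurableEmbedding]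
    simp only [Function.comp_def, neg_sq, neg_preimage, neg_Iio, neg_neg, abs_neg, neg_zero]
    refine h.congr_fun (fun y hy => ?_) measurableSet_Ioi
    rw [abs_of_pos hy]
  · rw [integrableOn_Ici_iff_integrableOn_Ioi]
    refine h.congr_fun (fun y hy => ?_) measurableSet_Ioi
    rw [abs_of_pos hy]

lemma integrable_abs_rpow_gaussian :
    Integrable (fun y : ℝ => |y| ^ (-(1/3) : ℝ)) (gaussianReal 0 1) := by
  rw [gaussianReal_of_var_ne_zero 0 one_ne_zero,
    integrable_withDensity_iff (measurable_gaussianPDF 0 1)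
      (ae_of_all _ fun x => ENNReal.ofReal_lt_top)]
  have htr : ∀ x : ℝ, (gaussianPDF 0 1 x).toReal = gaussianPDFReal 0 1 x :=
    fun x => ENNReal.toReal_ofReal (gaussianPDFReal_nonneg 0 1 x)
  have h := (integrable_abs_rpow_mul_exp (b := (1/2:ℝ)) one_half_pos
      (by norm_num : (-1:ℝ) < -(1/3))).const_mul ((Real.sqrt (2 * Real.pi))⁻¹)
  refine h.congr (ae_of_all _ fun x => ?_)
  simp only [htr, gaussianPDFReal]
  rw [show -(x - 0) ^ 2 / (2 * ((1:ℝ≥0):ℝ)) = -(1/2) * x ^ 2 by push_cast; ring]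
  push_cast
  ring_nf

lemma integrable_prod_rpow :
    Integrable (fun x : Fin 3 → ℝ => ∏ i, |x i| ^ (-(1/3) : ℝ))
      (Measure.pi fun _ : Fin 3 => gaussianReal 0 1) := by
  letI : MeasureSpace ℝ := ⟨gaussianReal 0 1⟩
  haveI : SigmaFinite (volume : Measure ℝ) :=
    inferInstanceAs (SigmaFinite (gaussianReal 0 1))
  exact Integrable.fintype_prod (f := fun _ : Fin 3 => fun y : ℝ => |y| ^ (-(1/3) : ℝ))
    (fun _ => integrable_abs_rpow_gaussian)

instance : NullSingletonClass (gaussianReal 0 (1:ℝ≥0)) :=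
  ⟨fun a => (gaussianReal_absolutelyContinuous 0 one_ne_zero) (measure_singleton a)⟩

lemma integrable_aux {c K : ℝ} (hc : 0 < c) (hK : 0 ≤ K) :
    Integrable (fun x : Fin 3 → ℝ => max ((c * N3 x)⁻¹ - K) 0)
      (Measure.pi fun _ : Fin 3 => gaussianReal 0 1) := by
  refine (integrable_prod_rpow.const_mul c⁻¹).mono' ?_ ?_
  · exact (((measurable_N3.const_mul c).inv.sub measurable_const).max
      measurable_const).aestronglyMeasurable
  · have hae : ∀ᵐ x ∂(Measure.pi fun _ : Fin 3 => gaussianReal 0 1), ∀ i, x i ≠ 0 := by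
      rw [ae_all_iff]
      exact fun i => Measure.ae_eval_ne _ i 0
    filter_upwards [hae] with x hx
    have hP : ∀ i, 0 < |x i| := fun i => abs_pos.2 (hx i)
    have hprod_pos : 0 < ∏ i, |x i| := Finset.prod_pos fun i _ => hP i
    have hN : 0 < N3 x := lt_of_lt_of_le (hP 0) (abs_le_N3 x 0)
    have key : (N3 x)⁻¹ ≤ ∏ i, |x i| ^ (-(1/3) : ℝ) := by
      have h1 : ∏ i, |x i| ≤ N3 x ^ (3:ℕ) := by
        calc ∏ i, |x i| ≤ ∏ _i : Fin 3, N3 x :=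
              Finset.prod_le_prod (fun i _ => (hP i).le) (fun i _ => abs_le_N3 x i)
          _ = N3 x ^ (3:ℕ) := by simp
      have h2 : (∏ i, |x i|) ^ ((1:ℝ)/3) ≤ N3 x := by
        have h3 := Real.rpow_le_rpow hprod_pos.le h1 (by norm_num : (0:ℝ) ≤ 1/3)
        rwa [← Real.rpow_natCast (N3 x) 3, ← Real.rpow_mul (N3_nonneg x),
          show ((3:ℕ):ℝ) * (1/3) = 1 by norm_num, Real.rpow_one] at h3
      calc (N3 x)⁻¹ ≤ ((∏ i, |x i|) ^ ((1:ℝ)/3))⁻¹ :=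
            inv_anti₀ (Real.rpow_pos_of_pos hprod_pos _) h2
        _ = (∏ i, |x i|) ^ (-(1/3) : ℝ) := (Real.rpow_neg hprod_pos.le _).symm
        _ = ∏ i, |x i| ^ (-(1/3) : ℝ) :=
            (Real.finset_prod_rpow _ _ (fun i _ => abs_nonneg _) _).symm
    have hmax : max ((c * N3 x)⁻¹ - K) 0 ≤ c⁻¹ * ∏ i, |x i| ^ (-(1/3) : ℝ) := by
      refine max_le (le_trans (sub_le_self _ hK) ?_) (by positivity)
      rw [mul_inv]
      exact mul_le_mul_of_nonneg_left key (inv_nonneg.2 hc.le)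
    rw [Real.norm_eq_abs, abs_of_nonneg (le_max_right _ _)]
    exact hmax

section Joint

variable {Ω : Type*} [MeasurableSpace Ω] {μ : Measure Ω} [IsProbabilityMeasure μ]

lemma joint_aemeasurable {f : Fin 3 → Ω → ℝ} (hmeas : ∀ i, AEMeasurable (f i) μ) :
    AEMeasurable (fun ω i => f i ω) μ := by
  refine ⟨fun ω i => (hmeas i).mk _ ω,
    measurable_pi_lambda _ fun i => (hmeas i).measurable_mk, ?_⟩
  filter_upwards [(hmeas 0).ae_eq_mk, (hmeas 1).ae_eq_mk, (hmeas 2).ae_eq_mk] with ω h0 h1 h2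
  funext i
  fin_cases i
  · exact h0
  · exact h1
  · exact h2

lemma map_pi_of_iIndepFun {f : Fin 3 → Ω → ℝ}
    (hmeas : ∀ i, AEMeasurable (f i) μ)
    (hind : iIndepFun f μ)
    (ν : Fin 3 → Measure ℝ) [∀ i, SigmaFinite (ν i)]
    (hν : ∀ i, Measure.map (f i) μ = ν i) :
    Measure.map (fun ω i => f i ω) μ = Measure.pi ν := by
  refine (Measure.pi_eq fun s hs => ?_).symm
  rw [Measure.map_apply_of_aemeasurable (joint_aemeasurable hmeas)
    (MeasurableSet.univ_pi hs)]
  have hpre : (fun ω i => f i ω) ⁻¹' (Set.pi Set.univ s) = ⋂ i ∈ Finset.univ, f i ⁻¹' s i := by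
    ext ω; simp [Set.mem_pi]
  rw [hpre, hind.measure_inter_preimage_eq_mul Finset.univ (fun i _ => hs i)]
  exact Finset.prod_congr rfl fun i _ =>
    (Measure.map_apply_of_aemeasurable (hmeas i) (hs i)).symm.trans (by rw [hν i])

variable {W : ℝ≥0 → Ω → EuclideanSpace ℝ (Fin 3)}
  (hW : IsBrownianMotionFrom μ W 0)

include hW

lemma coord_law (t : ℝ≥0) (i : Fin 3) :
    Measure.map (fun ω => W t ω i) μ = gaussianReal 0 t := by
  obtain ⟨h0, hB, -⟩ := hW
  obtain ⟨-, -, hinc, -⟩ := hB i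
  have h := hinc 0 t zero_le
  have heq : (fun ω => (W t ω i - (0 : EuclideanSpace ℝ (Fin 3)) i)
      - (W 0 ω i - (0 : EuclideanSpace ℝ (Fin 3)) i)) = fun ω => W t ω i := by
    funext ω
    rw [h0 ω]
    simp
  rw [heq] at h
  simpa using h

lemma coord_aemeasurable (t : ℝ≥0) (i : Fin 3) :
    AEMeasurable (fun ω => W t ω i) μ :=
  aemeasurable_of_map_neZero (by rw [coord_law hW t i]; infer_instance)

lemma coord_indep (t : ℝ≥0) :
    iIndepFun (fun (i : Fin 3) ω => W t ω i) μ :=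
  hW.2.2.comp (fun _ => fun p : ℝ≥0 → ℝ => p t) (fun _ => measurable_pi_apply t)

lemma vec_law (t : ℝ≥0) :
    Measure.map (fun ω i => W t ω i) μ = Measure.pi (fun _ : Fin 3 => gaussianReal 0 t) :=
  map_pi_of_iIndepFun (coord_aemeasurable hW t) (coord_indep hW t) _
    (fun i => coord_law hW t i)

end Joint

lemma scale_mp (t : ℝ≥0) :
    MeasurePreserving (fun y : ℝ => Real.sqrt t * y) (gaussianReal 0 1) (gaussianReal 0 t) := by
  refine ⟨measurable_id.const_mul _, ?_⟩
  have h := gaussianReal_map_const_mul (μ := 0) (v := 1) (Real.sqrt t)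
  have h2 : (⟨Real.sqrt t ^ 2, sq_nonneg _⟩ : ℝ≥0) * 1 = t := by
    rw [mul_one]
    exact NNReal.coe_injective (by show Real.sqrt t ^ 2 = (t:ℝ); exact Real.sq_sqrt t.2)
  simpa [h2] using h

lemma pi_gaussian_eq_map (t : ℝ≥0) :
    Measure.pi (fun _ : Fin 3 => gaussianReal 0 t)
      = Measure.map (fun (x : Fin 3 → ℝ) i => Real.sqrt t * x i)
        (Measure.pi fun _ : Fin 3 => gaussianReal 0 1) :=
  (measurePreserving_pi _ _ (fun _ => scale_mp t)).map_eq.symm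

lemma map_N3_pi_gaussian (t : ℝ≥0) :
    Measure.map N3 (Measure.pi (fun _ : Fin 3 => gaussianReal 0 t))
      = Measure.map (fun x => Real.sqrt t * N3 x)
          (Measure.pi fun _ : Fin 3 => gaussianReal 0 1) := by
  rw [pi_gaussian_eq_map t,
    Measure.map_map measurable_N3
      (measurable_pi_lambda _ fun i => (measurable_pi_apply i).const_mul _)]
  congr 1
  funext x
  exact N3_smul _ (Real.sqrt_nonneg _) x

end InvBesselAux

open InvBesselAux

/-- **Proposition 6**: for a three-dimensional Bessel process `X` started from `0`
(realized as the Euclidean norm of a three-dimensional Brownian motion started from the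
origin), any two time points `u > t > 0` and any `K ≥ 0`, one has
`E[(1/X_u − K)⁺] < E[(1/X_t − K)⁺]`. -/
theorem inverse_bessel_call_strictAnti_from_zero
    {Ω : Type*} [MeasurableSpace Ω] (μ : Measure Ω) [IsProbabilityMeasure μ]
    (W : ℝ≥0 → Ω → EuclideanSpace ℝ (Fin 3))
    (hW : IsBrownianMotionFrom μ W 0)
    (K : ℝ) (hK : 0 ≤ K) (t u : ℝ≥0) (ht : 0 < t) (htu : t < u) :
    ∫ ω, max ((‖W u ω‖)⁻¹ - K) 0 ∂μ < ∫ ω, max ((‖W t ω‖)⁻¹ - K) 0 ∂μ := by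
  -- Step 1: reduce both expectations to integrals against the standard Gaussian on `Fin 3 → ℝ`.
  have key : ∀ s : ℝ≥0, ∫ ω, max ((‖W s ω‖)⁻¹ - K) 0 ∂μ
      = ∫ x, max ((Real.sqrt s * N3 x)⁻¹ - K) 0
          ∂(Measure.pi fun _ : Fin 3 => gaussianReal 0 1) := by
    intro s
    have hjm : AEMeasurable (fun ω (i : Fin 3) => W s ω i) μ :=
      joint_aemeasurable (coord_aemeasurable hW s)
    have hg : Measurable (fun y : ℝ => max (y⁻¹ - K) 0) :=
      (measurable_inv.sub measurable_const).max measurable_const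
    have hnormeq : (fun ω => ‖W s ω‖) = N3 ∘ (fun ω (i : Fin 3) => W s ω i) := by
      funext ω
      simp [N3, EuclideanSpace.norm_eq, sq_abs, Function.comp]
    have hnlaw : Measure.map (fun ω => ‖W s ω‖) μ
        = Measure.map (fun x => Real.sqrt s * N3 x)
            (Measure.pi fun _ : Fin 3 => gaussianReal 0 1) := by
      rw [hnormeq, ← AEMeasurable.map_map_of_aemeasurable measurable_N3.aemeasurable hjm,
        vec_law hW s, map_N3_pi_gaussian]
    have hnm : AEMeasurable (fun ω => ‖W s ω‖) μ := by
      rw [hnormeq]; exact measurable_N3.comp_aemeasurable hjm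
    calc ∫ ω, max ((‖W s ω‖)⁻¹ - K) 0 ∂μ
        = ∫ y, max (y⁻¹ - K) 0 ∂(Measure.map (fun ω => ‖W s ω‖) μ) :=
          (integral_map hnm hg.aestronglyMeasurable).symm
      _ = ∫ y, max (y⁻¹ - K) 0 ∂(Measure.map (fun x => Real.sqrt s * N3 x)
            (Measure.pi fun _ : Fin 3 => gaussianReal 0 1)) := by rw [hnlaw]
      _ = ∫ x, max ((Real.sqrt s * N3 x)⁻¹ - K) 0
            ∂(Measure.pi fun _ : Fin 3 => gaussianReal 0 1) :=
          integral_map (measurable_N3.const_mul _).aemeasurable hg.aestronglyMeasurable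
  rw [key u, key t]
  -- Step 2: strict comparison of the two Gaussian integrals.
  set Gp : Measure (Fin 3 → ℝ) := Measure.pi fun _ : Fin 3 => gaussianReal 0 1 with hGp
  set c : ℝ := Real.sqrt t with hc
  set d : ℝ := Real.sqrt u with hd
  have hc0 : 0 < c := Real.sqrt_pos.2 (by exact_mod_cast ht)
  have hd0 : 0 < d := Real.sqrt_pos.2 (by exact_mod_cast ht.trans htu)
  have hcd : c < d := by
    apply Real.sqrt_lt_sqrt (by positivity)
    exact_mod_cast htu
  set A : (Fin 3 → ℝ) → ℝ := fun x => max ((c * N3 x)⁻¹ - K) 0 with hA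
  set B : (Fin 3 → ℝ) → ℝ := fun x => max ((d * N3 x)⁻¹ - K) 0 with hB
  have hAi : Integrable A Gp := integrable_aux hc0 hK
  have hBi : Integrable B Gp := integrable_aux hd0 hK
  have hle : ∀ x, B x ≤ A x := by
    intro x
    rcases (N3_nonneg x).eq_or_lt with h | h
    · simp [hA, hB, ← h]
    · refine max_le_max (sub_le_sub_right ?_ K) le_rfl
      exact inv_anti₀ (by positivity) (mul_le_mul_of_nonneg_right hcd.le h.le)
  have hnonneg : ∀ x, 0 ≤ A x - B x := fun x => sub_nonneg.2 (hle x)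
  set ε : ℝ := ((K + 1) * d)⁻¹ with hε
  have hε0 : 0 < ε := by positivity
  have hSsub : N3 ⁻¹' Set.Ioo 0 ε ⊆ Function.support (fun x => A x - B x) := by
    intro x hx
    obtain ⟨hx0, hxε⟩ := hx
    have hdx : 0 < d * N3 x := by positivity
    have hcx : 0 < c * N3 x := by positivity
    have h1 : d * N3 x < (K + 1)⁻¹ := by
      have := (mul_lt_mul_iff_right₀ hd0).2 hxε
      rwa [hε, mul_inv, ← mul_assoc, mul_comm d (K+1)⁻¹, mul_assoc,
        mul_inv_cancel₀ hd0.ne', mul_one] at this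
    have h2 : K + 1 < (d * N3 x)⁻¹ := by
      rw [← inv_inv (K + 1)]
      exact inv_strictAnti₀ hdx h1
    have h3 : (d * N3 x)⁻¹ ≤ (c * N3 x)⁻¹ :=
      inv_anti₀ hcx (mul_le_mul_of_nonneg_right hcd.le hx0.le)
    have hBK : K < (d * N3 x)⁻¹ := lt_trans (by linarith) h2
    have hAK : K < (c * N3 x)⁻¹ := lt_of_lt_of_le hBK h3
    have hBx : B x = (d * N3 x)⁻¹ - K := max_eq_left (by linarith)
    have hAx : A x = (c * N3 x)⁻¹ - K := max_eq_left (by linarith)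
    have hstrict : (d * N3 x)⁻¹ < (c * N3 x)⁻¹ :=
      inv_strictAnti₀ hcx ((mul_lt_mul_iff_left₀ hx0).2 hcd)
    simp only [Function.mem_support, hAx, hBx]
    intro hcontra
    nlinarith
  haveI : (gaussianReal 0 (1:ℝ≥0)).IsOpenPosMeasure := by
    refine ⟨fun U hU hne h0 => ?_⟩
    exact hU.measure_ne_zero volume hne ((gaussianReal_absolutelyContinuous' 0 one_ne_zero) h0)
  have hopen : IsOpen (N3 ⁻¹' Set.Ioo 0 ε) := continuous_N3.isOpen_preimage _ isOpen_Ioo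
  have hne : (N3 ⁻¹' Set.Ioo 0 ε).Nonempty := by
    refine ⟨![ε/2, 0, 0], ?_⟩
    have hval : N3 ![ε/2, 0, 0] = ε/2 := by
      simp [N3, Fin.sum_univ_three]
      rw [Real.sqrt_sq (by positivity)]
    constructor <;> rw [hval] <;> [positivity; linarith]
  have hpos : 0 < Gp (N3 ⁻¹' Set.Ioo 0 ε) := hopen.measure_pos Gp hne
  have hdiffpos : 0 < ∫ x, (A x - B x) ∂Gp := by
    rw [integral_pos_iff_support_of_nonneg hnonneg (hAi.sub hBi)]
    exact lt_of_lt_of_le hpos (measure_mono hSsub)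
  rw [integral_sub hAi hBi] at hdiffpos
  linarith
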